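/- Define V̂ : ℝ² → ℝ by V̂(x,y) = (x² − 3xy)² + (x² − 4xy − 2y²)². Then (i) ∂V̂/∂x + ∂V̂/∂y = −6x³ + 90xy² + 32y³ at every point (x,y) ∈ ℝ², and (ii) V̂ is positive definite: V̂(0,0) = 0 and V̂(x,y) > 0 for every (x,y) ≠ (0,0). -/

import Mathlib

/-!
The sum of the two partial derivatives is the derivative along the diagonal line
`t ↦ p + t • (1, 1)`, i.e. along the flow of `∂/∂x + ∂/∂y`; restricted to that line `V̂` is a
polynomial in `t` whose derivative at `0` is computed by the chain rule.

`V̂` is the sum of the squares of the quadratic forms `a = x² − 3xy` and `b = x² − 4xy − 2y²`,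
so it vanishes only at common zeros of `a` and `b`. Since `a − b = y (x + 2y)`, such a zero has
`y = 0`, whence `x² = 0`, or `x = −2y`, whence `a = 10y² = 0`.
-/

theorem fderiv_apply_one_zero_add_fderiv_apply_zero_one {𝕜 F : Type*}
    [NontriviallyNormedField 𝕜] [NormedAddCommGroup F] [NormedSpace 𝕜 F]
    {f : 𝕜 × 𝕜 → F} {p : 𝕜 × 𝕜} (hf : DifferentiableAt 𝕜 f p) :
    fderiv 𝕜 f p (1, 0) + fderiv 𝕜 f p (0, 1) = deriv (fun t : 𝕜 ↦ f (p + t • (1, 1))) 0 := by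
  rw [← map_add, Prod.mk_add_mk, add_zero, zero_add, ← hf.lineDeriv_eq_fderiv]
  rfl

def controlledPotential {R : Type*} [CommRing R] (x y : R) : R :=
  (x ^ 2 - 3 * x * y) ^ 2 + (x ^ 2 - 4 * x * y - 2 * y ^ 2) ^ 2

theorem eq_zero_of_sq_sub_three_mul_eq_zero_of_sq_sub_four_mul_sub_two_sq_eq_zero
    {K : Type*} [Field K] [CharZero K] {x y : K}
    (ha : x ^ 2 - 3 * x * y = 0) (hb : x ^ 2 - 4 * x * y - 2 * y ^ 2 = 0) :
    x = 0 ∧ y = 0 := by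
  have hdiff : y * (x + 2 * y) = 0 := by linear_combination ha - hb
  rcases mul_eq_zero.mp hdiff with hy | hxy
  · subst hy
    exact ⟨pow_eq_zero_iff two_ne_zero |>.mp (by simpa using ha), rfl⟩
  · have hx : x = -2 * y := by linear_combination hxy
    subst hx
    have hy : (10 : K) * y ^ 2 = 0 := by linear_combination ha
    have hy : y = 0 := pow_eq_zero_iff two_ne_zero |>.mp
      ((mul_eq_zero.mp hy).resolve_left (by norm_num))
    exact ⟨by simp [hy], hy⟩

theorem controlledPotential_pos {K : Type*} [Field K] [LinearOrder K] [IsStrictOrderedRing K]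
    {x y : K} (h : (x, y) ≠ (0, 0)) : 0 < controlledPotential x y := by
  refine lt_of_le_of_ne (by unfold controlledPotential; positivity) fun hzero ↦ h ?_
  obtain ⟨ha, hb⟩ := (add_eq_zero_iff_of_nonneg (sq_nonneg _) (sq_nonneg _)).mp hzero.symm
  obtain ⟨rfl, rfl⟩ := eq_zero_of_sq_sub_three_mul_eq_zero_of_sq_sub_four_mul_sub_two_sq_eq_zero
    (pow_eq_zero_iff two_ne_zero |>.mp ha) (pow_eq_zero_iff two_ne_zero |>.mp hb)
  rfl

theorem hasDerivAt_controlledPotential_add_add (x y : ℝ) :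
    HasDerivAt (fun t : ℝ ↦ controlledPotential (x + t) (y + t))
      (-6 * x ^ 3 + 90 * x * y ^ 2 + 32 * y ^ 3) 0 := by
  have hx : HasDerivAt (fun t : ℝ ↦ x + t) 1 0 := (hasDerivAt_id 0).const_add x
  have hy : HasDerivAt (fun t : ℝ ↦ y + t) 1 0 := (hasDerivAt_id 0).const_add y
  have ha := (hx.fun_pow 2).fun_sub ((hx.const_mul 3).fun_mul hy)
  have hb := ((hx.fun_pow 2).fun_sub ((hx.const_mul 4).fun_mul hy)).fun_sub
    ((hy.fun_pow 2).const_mul 2)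
  exact ((ha.fun_pow 2).fun_add (hb.fun_pow 2)).congr_deriv (by ring)

theorem statement17 (V : ℝ × ℝ → ℝ)
    (hV : ∀ p : ℝ × ℝ, V p =
      (p.1 ^ 2 - 3 * p.1 * p.2) ^ 2 + (p.1 ^ 2 - 4 * p.1 * p.2 - 2 * p.2 ^ 2) ^ 2) :
    (∀ p : ℝ × ℝ, fderiv ℝ V p (1, 0) + fderiv ℝ V p (0, 1)
      = -6 * p.1 ^ 3 + 90 * p.1 * p.2 ^ 2 + 32 * p.2 ^ 3) ∧
    V (0, 0) = 0 ∧
    (∀ p : ℝ × ℝ, p ≠ (0, 0) → 0 < V p) := by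
  have hVfun : V = fun p ↦ controlledPotential p.1 p.2 := funext hV
  subst hVfun
  refine ⟨fun p ↦ ?_, by simp [controlledPotential], fun p hp ↦ controlledPotential_pos hp⟩
  have hdiff : DifferentiableAt ℝ (fun p : ℝ × ℝ ↦ controlledPotential p.1 p.2) p := by
    unfold controlledPotential; fun_prop
  rw [fderiv_apply_one_zero_add_fderiv_apply_zero_one hdiff]
  simpa using (hasDerivAt_controlledPotential_add_add p.1 p.2).deriv
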